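/- Let H : ℝ → B(E) be continuous with values in self-adjoint operators, and let G : ℝ → B(E) be differentiable satisfying G'(t) = iH(t)G(t) with G(0) = 1 (the time-ordered exponential). Then each G(t) is an isometry on its range; in particular ‖G(t)y‖ = ‖y‖ for all y ∈ E. -/

import Mathlib

/-!
`iH(t)` is skew-adjoint, so `⟪G y, iHG y⟫ + ⟪iHG y, G y⟫ = 0`: the derivative of
`t ↦ ⟪G(t) y, G(t) y⟫` vanishes, and this quantity keeps its value `‖y‖²` at `t = 0`.
-/

open ContinuousLinearMap

section

variable {𝕜 E : Type*} [RCLike 𝕜] [NormedAddCommGroup E] [InnerProductSpace 𝕜 E] [CompleteSpace E]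

theorem inner_apply_left_eq_neg_of_mem_skewAdjoint {A : E →L[𝕜] E}
    (hA : A ∈ skewAdjoint (E →L[𝕜] E)) (x y : E) : inner 𝕜 (A x) y = -inner 𝕜 x (A y) := by
  rw [← adjoint_inner_right, ← star_eq_adjoint, skewAdjoint.mem_iff.mp hA, neg_apply,
    inner_neg_right]

theorem norm_apply_eq_of_hasDerivAt_mul_mem_skewAdjoint [NormedSpace ℝ E] [IsScalarTower ℝ 𝕜 E]
    {A G : ℝ → E →L[𝕜] E} (hA : ∀ t, A t ∈ skewAdjoint (E →L[𝕜] E))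
    (hG : ∀ t, HasDerivAt G (A t * G t) t) (s t : ℝ) (y : E) : ‖G t y‖ = ‖G s y‖ := by
  have hderiv : ∀ r, HasDerivAt (fun r ↦ inner 𝕜 (G r y) (G r y)) 0 r := fun r ↦ by
    have hGy : HasDerivAt (fun r ↦ G r y) (A r (G r y)) r :=
      ((apply 𝕜 E y).restrictScalars ℝ).hasFDerivAt.comp_hasDerivAt r (hG r)
    simpa [inner_apply_left_eq_neg_of_mem_skewAdjoint (hA r)] using hGy.inner 𝕜 hGy
  have hconst : inner 𝕜 (G t y) (G t y) = inner 𝕜 (G s y) (G s y) :=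
    is_const_of_deriv_eq_zero (fun r ↦ (hderiv r).differentiableAt) (fun r ↦ (hderiv r).deriv) t s
  rw [inner_self_eq_norm_sq_to_K, inner_self_eq_norm_sq_to_K] at hconst
  exact (pow_left_inj₀ (norm_nonneg _) (norm_nonneg _) two_ne_zero).mp (by exact_mod_cast hconst)

end

theorem time_ordered_exponential_isometric_general
    (E : Type*) [NormedAddCommGroup E] [InnerProductSpace ℂ E] [CompleteSpace E]
    (H : ℝ → (E →L[ℂ] E))
    (hsa : ∀ t : ℝ, IsSelfAdjoint (H t))
    (G : ℝ → (E →L[ℂ] E))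
    (hG : ∀ t : ℝ, HasDerivAt G (Complex.I • (H t * G t)) t)
    (hG0 : G 0 = 1) :
    ∀ (t : ℝ) (y : E), ‖G t y‖ = ‖y‖ := by
  intro t y
  have hskew : ∀ t, Complex.I • H t ∈ skewAdjoint (E →L[ℂ] E) := fun t ↦
    (hsa t).I_smul_mem_skewAdjoint (K := ℂ)
  have hG' : ∀ t, HasDerivAt G ((Complex.I • H t) * G t) t := by
    simpa only [smul_mul_assoc] using hG
  simpa [hG0] using norm_apply_eq_of_hasDerivAt_mul_mem_skewAdjoint hskew hG' 0 t y

/-- If `G'(t) = iH(t)G(t)`, `G(0) = 1`, with each `H(t)` self-adjoint, then each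
`G(t)` is an isometry: `‖G(t)y‖ = ‖y‖`. -/
theorem time_ordered_exponential_isometric
    (E : Type*) [NormedAddCommGroup E] [InnerProductSpace ℂ E] [CompleteSpace E]
    (H : ℝ → (E →L[ℂ] E)) (hcont : Continuous H)
    (hsa : ∀ t : ℝ, IsSelfAdjoint (H t))
    (G : ℝ → (E →L[ℂ] E))
    (hG : ∀ t : ℝ, HasDerivAt G (Complex.I • (H t * G t)) t)
    (hG0 : G 0 = 1) :
    ∀ (t : ℝ) (y : E), ‖G t y‖ = ‖y‖ :=
  time_ordered_exponential_isometric_general E H hsa G hG hG0
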